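/- Let q>0 and let g : Ω×(0,∞) → ℝ be a Carathéodory function bounded below such that y ↦ g(x,y)/y is decreasing on (0,∞) for a.e. x ∈ Ω. Let u, v ∈ L^∞(Ω) ∩ X₀(Ω) with u > 0 and v > 0 a.e. in Ω, ∫_Ω u^{1−q} dx < ∞ and ∫_Ω v^{1−q} dx < ∞, and suppose that for every φ ∈ X₀(Ω) with φ ≥ 0: E(u,φ) ≤ ∫_Ω (u^{-q} + g(x,u))φ dx and E(v,φ) ≥ ∫_Ω (v^{-q} + g(x,v))φ dx. Assume moreover there exist a measurable w : Ω → (0,∞), w ∈ L^∞(Ω), and constants c₁, c₂ > 0 with c₁w ≤ u ≤ c₂w and c₁w ≤ v ≤ c₂w a.e. in Ω, and ∫_Ω |g(x,c₁w(x))| w(x) dx < ∞ and ∫_Ω |g(x,c₂w(x))| w(x) dx < ∞. Then u ≤ v a.e. in Ω. -/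

import Mathlib

open MeasureTheory Set Filter
open scoped ENNReal RealInnerProductSpace

noncomputable section

/-- Euclidean space ℝⁿ. -/
abbrev Eu (n : ℕ) : Type := EuclideanSpace ℝ (Fin n)

/-- The normalizing constant `C_n^s = π^{-n/2} 2^{2s-1} s Γ((n+2s)/2)/Γ(1-s)`. -/
def Cns (n : ℕ) (s : ℝ) : ℝ :=
  Real.pi ^ (-(n : ℝ) / 2) * (2 : ℝ) ^ (2 * s - 1) * s *
    Real.Gamma (((n : ℝ) + 2 * s) / 2) / Real.Gamma (1 - s)

/-- `Q = ℝ²ⁿ ∖ ((ℝⁿ∖Ω) × (ℝⁿ∖Ω))`. -/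
def Qset {n : ℕ} (Ω : Set (Eu n)) : Set (Eu n × Eu n) := (Ωᶜ ×ˢ Ωᶜ)ᶜ

/-- The Gagliardo kernel `(u(x)-u(y))(v(x)-v(y))/|x-y|^{n+2s}`. -/
def gKer {n : ℕ} (s : ℝ) (u v : Eu n → ℝ) (p : Eu n × Eu n) : ℝ :=
  (u p.1 - u p.2) * (v p.1 - v p.2) / dist p.1 p.2 ^ ((n : ℝ) + 2 * s)

/-- The bilinear form `E(u,v) = C_n^s ∫∫_Q (u(x)-u(y))(v(x)-v(y))/|x-y|^{n+2s}`. -/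
def bilinE {n : ℕ} (s : ℝ) (Ω : Set (Eu n)) (u v : Eu n → ℝ) : ℝ :=
  Cns n s * ∫ p in Qset Ω, gKer s u v p

/-- `‖u‖²_{X₀(Ω)}`. -/
def normX0sq {n : ℕ} (s : ℝ) (Ω : Set (Eu n)) (u : Eu n → ℝ) : ℝ := bilinE s Ω u u

/-- `‖u‖_{X₀(Ω)}`. -/
def normX0 {n : ℕ} (s : ℝ) (Ω : Set (Eu n)) (u : Eu n → ℝ) : ℝ :=
  Real.sqrt (normX0sq s Ω u)

/-- `u ∈ X₀(Ω)`: measurable, vanishing a.e. outside `Ω`, square integrable on `Ω`,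
with finite Gagliardo energy. -/
def MemX0 {n : ℕ} (s : ℝ) (Ω : Set (Eu n)) (u : Eu n → ℝ) : Prop :=
  Measurable u ∧ (∀ᵐ x : Eu n, x ∉ Ω → u x = 0) ∧
    MemLp u 2 (volume.restrict Ω) ∧ IntegrableOn (gKer s u u) (Qset Ω)

/-- `Ω` has `C²` boundary: near every boundary point, `Ω` is given by a `C²` local
defining function with nonvanishing differential. -/
def HasC2Boundary {n : ℕ} (Ω : Set (Eu n)) : Prop :=
  ∀ x ∈ frontier Ω, ∃ U : Set (Eu n), IsOpen U ∧ x ∈ U ∧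
    ∃ g : Eu n → ℝ, ContDiff ℝ 2 g ∧ (∀ y ∈ U, (y ∈ Ω ↔ g y < 0)) ∧
      ∀ y ∈ U ∩ frontier Ω, fderiv ℝ g y ≠ 0

/-- Bounded domain (open, connected, nonempty) with `C²` boundary. -/
def GoodDomain {n : ℕ} (Ω : Set (Eu n)) : Prop :=
  IsOpen Ω ∧ Bornology.IsBounded Ω ∧ IsConnected Ω ∧ HasC2Boundary Ω

/-- `δ(x) = dist(x, ∂Ω)`. -/
def bdry {n : ℕ} (Ω : Set (Eu n)) (x : Eu n) : ℝ := Metric.infDist x (frontier Ω)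

/-- `g ∈ L^∞(Ω)`. -/
def MemLinfty {n : ℕ} (Ω : Set (Eu n)) (g : Eu n → ℝ) : Prop :=
  Measurable g ∧ ∃ M : ℝ, ∀ᵐ x ∂(volume.restrict Ω), |g x| ≤ M

/-- `ess inf_K u > 0` for every compact `K ⊆ Ω`. -/
def PosOnCompacts {n : ℕ} (Ω : Set (Eu n)) (u : Eu n → ℝ) : Prop :=
  ∀ K : Set (Eu n), IsCompact K → K ⊆ Ω →
    ∃ c : ℝ, 0 < c ∧ ∀ᵐ x ∂(volume.restrict K), c ≤ u x

/-- The conical shell `𝒞` (depending on `q`, `s` and a fixed `r > diam Ω`). -/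
def InCone {n : ℕ} (s q r : ℝ) (Ω : Set (Eu n)) (v : Eu n → ℝ) : Prop :=
  MemLinfty Ω v ∧ ∃ k₁ k₂ : ℝ, 0 < k₁ ∧ 0 < k₂ ∧
    ∀ᵐ x ∂(volume.restrict Ω),
      (q < 1 → k₁ * bdry Ω x ^ s ≤ v x ∧ v x ≤ k₂ * bdry Ω x ^ s) ∧
      (q = 1 →
        k₁ * (bdry Ω x ^ s * Real.sqrt (Real.log (r / bdry Ω x ^ s))) ≤ v x ∧
        v x ≤ k₂ * (bdry Ω x ^ s * Real.sqrt (Real.log (r / bdry Ω x ^ s)))) ∧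
      (1 < q →
        k₁ * bdry Ω x ^ (2 * s / (q + 1)) ≤ v x ∧
        v x ≤ k₂ * bdry Ω x ^ (2 * s / (q + 1)))

/-- Weak solution of `(S)`: `u + λ((−Δ)^s u − u^{-q}) = g` in `Ω`, `u = 0` outside `Ω`. -/
def IsWeakSolS {n : ℕ} (s q lam : ℝ) (Ω : Set (Eu n)) (g u : Eu n → ℝ) : Prop :=
  MemX0 s Ω u ∧ PosOnCompacts Ω u ∧
    ∀ φ : Eu n → ℝ, MemX0 s Ω φ →
      IntegrableOn (fun x => u x ^ (-q) * φ x) Ω ∧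
      (∫ x in Ω, u x * φ x) + lam * (bilinE s Ω u φ - ∫ x in Ω, u x ^ (-q) * φ x) =
        ∫ x in Ω, g x * φ x

/-- `u ∈ C^α(ℝⁿ)`. -/
def HolderCα {n : ℕ} (α : ℝ) (u : Eu n → ℝ) : Prop :=
  ∃ C : ℝ, 0 < C ∧ ∀ x y : Eu n, |u x - u y| ≤ C * dist x y ^ α

/-- Hölder regularity with exponent `α = s` if `q<1`, `α = s-ε` (any small `ε>0`) if `q=1`,
and `α = 2s/(q+1)` if `q>1`. -/
def RegAlpha {n : ℕ} (s q : ℝ) (u : Eu n → ℝ) : Prop :=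
  (q < 1 → HolderCα s u) ∧
  (q = 1 → ∃ ε₀ : ℝ, 0 < ε₀ ∧ ∀ ε : ℝ, 0 < ε → ε < ε₀ → HolderCα (s - ε) u) ∧
  (1 < q → HolderCα (2 * s / (q + 1)) u)

/-- `f : Ω × (0,∞) → ℝ` is a Carathéodory function. -/
def Caratheodory {n : ℕ} (Ω : Set (Eu n)) (f : Eu n → ℝ → ℝ) : Prop :=
  (∀ y : ℝ, Measurable fun x => f x y) ∧
    ∀ᵐ x ∂(volume.restrict Ω), ContinuousOn (f x) (Ioi 0)

/-- `f` is bounded below. -/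
def BddBelowF {n : ℕ} (Ω : Set (Eu n)) (f : Eu n → ℝ → ℝ) : Prop :=
  ∃ l : ℝ, 0 ≤ l ∧ ∀ᵐ x ∂(volume.restrict Ω), ∀ y : ℝ, 0 < y → -l ≤ f x y

/-- `f` is locally Lipschitz in the second variable, uniformly in `x ∈ Ω`. -/
def LocLipschitzUnif {n : ℕ} (Ω : Set (Eu n)) (f : Eu n → ℝ → ℝ) : Prop :=
  ∀ a b : ℝ, 0 < a → a ≤ b → ∃ L : ℝ, 0 ≤ L ∧
    ∀ᵐ x ∂(volume.restrict Ω), ∀ y₁ ∈ Icc a b, ∀ y₂ ∈ Icc a b,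
      |f x y₁ - f x y₂| ≤ L * |y₁ - y₂|

/-- First eigenvalue `λ₁^s(Ω)` of `(−Δ)^s` with Dirichlet condition. -/
def lambda1 {n : ℕ} (s : ℝ) (Ω : Set (Eu n)) : ℝ :=
  sInf {c : ℝ | ∃ u : Eu n → ℝ, MemX0 s Ω u ∧ (0 < ∫ x in Ω, (u x) ^ 2) ∧
    c = normX0sq s Ω u / ∫ x in Ω, (u x) ^ 2}

/-- `f(x,y) ≤ μ y + l` with `0 ≤ μ < λ₁^s(Ω)`, `l ≥ 0` (the condition
`limsup_{y→∞} f(x,y)/y < λ₁^s(Ω)` uniformly in `x`). -/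
def UpperLinear {n : ℕ} (s : ℝ) (Ω : Set (Eu n)) (f : Eu n → ℝ → ℝ) (μ l : ℝ) : Prop :=
  0 ≤ μ ∧ μ < lambda1 s Ω ∧ 0 ≤ l ∧
    ∀ᵐ x ∂(volume.restrict Ω), ∀ y : ℝ, 0 < y → f x y ≤ μ * y + l

/-- Weak solution of `(Q^s)`: `(−Δ)^s u − u^{-q} = f(x,u)` in `Ω`, `u = 0` outside `Ω`. -/
def IsWeakSolQ {n : ℕ} (s q : ℝ) (Ω : Set (Eu n)) (f : Eu n → ℝ → ℝ) (u : Eu n → ℝ) : Prop :=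
  MemX0 s Ω u ∧ PosOnCompacts Ω u ∧
    ∀ φ : Eu n → ℝ, MemX0 s Ω φ →
      IntegrableOn (fun x => u x ^ (-q) * φ x) Ω ∧
      IntegrableOn (fun x => f x (u x) * φ x) Ω ∧
      bilinE s Ω u φ - (∫ x in Ω, u x ^ (-q) * φ x) = ∫ x in Ω, f x (u x) * φ x

/-!
Test the subsolution inequality for `u` with `φ₁ = (u² - v²)⁺ / u` and the supersolution
inequality for `v` with `φ₂ = (u² - v²)⁺ / v`. Both lie in `X₀(Ω)`: on the cone
`0 ≤ u ≤ K v`, `K = c₂ / c₁`, they are Lipschitz functions of `(u, v)`. A discrete Picone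
inequality gives `E(v, φ₂) ≤ E(u, φ₁)`, hence
`∫_Ω (v^{-q} + g(x,v)) φ₂ - (u^{-q} + g(x,u)) φ₁ ≤ 0`. Where `u > v` the integrand equals
`(u² - v²) ((v^{-q} + g(x,v)) / v - (u^{-q} + g(x,u)) / u) > 0`, because
`y ↦ y^{-q-1} + g(x,y) / y` is strictly decreasing; elsewhere it vanishes. So `{u > v}` is null.
-/

/-- The absolute value makes the test functions `(u² - v²)⁺ / u` and `(u² - v²)⁺ / v`
nonnegative everywhere, not only where `u, v > 0`. -/
def sqSubPosDiv (a b d : ℝ) : ℝ := max (a ^ 2 - b ^ 2) 0 / |d|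

theorem sqSubPosDiv_nonneg (a b d : ℝ) : 0 ≤ sqSubPosDiv a b d :=
  div_nonneg (le_max_right _ _) (abs_nonneg _)

theorem sqSubPosDiv_of_sq_le {a b : ℝ} (h : a ^ 2 ≤ b ^ 2) (d : ℝ) : sqSubPosDiv a b d = 0 := by
  rw [sqSubPosDiv, max_eq_right (sub_nonpos.2 h), zero_div]

theorem sqSubPosDiv_of_sq_lt {a b : ℝ} (h : b ^ 2 < a ^ 2) (d : ℝ) :
    sqSubPosDiv a b d = (a ^ 2 - b ^ 2) / |d| := by
  rw [sqSubPosDiv, max_eq_left (sub_nonneg.2 h.le)]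

theorem sqSubPosDiv_zero_left (b d : ℝ) : sqSubPosDiv 0 b d = 0 :=
  sqSubPosDiv_of_sq_le (by simpa using sq_nonneg b) d

theorem sqSubPosDiv_mul {t : ℝ} (ht : 0 ≤ t) (a b d : ℝ) :
    sqSubPosDiv (t * a) (t * b) (t * d) = t * sqSubPosDiv a b d := by
  rcases ht.eq_or_lt with rfl | ht
  · simp [sqSubPosDiv]
  · have : (t * a) ^ 2 - (t * b) ^ 2 = t ^ 2 * (a ^ 2 - b ^ 2) := by ring
    rw [sqSubPosDiv, sqSubPosDiv, this, ← mul_zero (t ^ 2), ← mul_max_of_nonneg _ _ (by positivity),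
      abs_mul, abs_of_pos ht, mul_zero]
    field_simp

theorem sqSubPosDiv_self_le_abs (a b : ℝ) : sqSubPosDiv a b a ≤ |a| := by
  rcases (abs_nonneg a).eq_or_lt with h | h
  · simp [sqSubPosDiv, ← h]
  · rw [sqSubPosDiv, div_le_iff₀ h, ← sq, sq_abs]
    exact max_le (by nlinarith [sq_nonneg b]) (sq_nonneg a)

theorem sqSubPosDiv_snd_le_mul {K a b : ℝ} (hK : 0 ≤ K) (ha : 0 ≤ a) (hb : 0 ≤ b)
    (hab : a ≤ K * b) : sqSubPosDiv a b b ≤ K * a := by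
  rcases hb.eq_or_lt with rfl | hb
  · simpa [sqSubPosDiv] using mul_nonneg hK ha
  · rw [sqSubPosDiv, abs_of_pos hb, div_le_iff₀ hb]
    exact max_le (by nlinarith) (by positivity)

theorem monotoneOn_sqSubPosDiv_one : MonotoneOn (fun t => sqSubPosDiv t 1 t) (Ici 0) := by
  intro s hs t ht hst
  dsimp only
  rcases le_or_gt (s ^ 2) (1 ^ 2) with h | h
  · rw [sqSubPosDiv_of_sq_le h]; exact sqSubPosDiv_nonneg _ _ _
  · have hs1 : 1 < s := by nlinarith [mem_Ici.1 hs]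
    rw [sqSubPosDiv_of_sq_lt h, sqSubPosDiv_of_sq_lt (by nlinarith), abs_of_pos (by linarith),
      abs_of_pos (by linarith), div_le_div_iff₀ (by linarith) (by linarith)]
    nlinarith [mul_nonneg (sub_nonneg.2 hst) (by nlinarith : (0 : ℝ) ≤ s * t + 1)]

theorem sqSubPosDiv_eq_mul_one {K a c : ℝ} (ha : 0 ≤ a) (hc : 0 ≤ c) (hac : a ≤ K * c) :
    sqSubPosDiv a c a = c * sqSubPosDiv (a / c) 1 (a / c) ∧
      sqSubPosDiv a c c = a * sqSubPosDiv (a / c) 1 (a / c) := by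
  rcases hc.eq_or_lt with rfl | hc
  · obtain rfl : a = 0 := le_antisymm (by simpa using hac) ha
    simp [sqSubPosDiv]
  · have key (d : ℝ) : sqSubPosDiv a c (c * d) = c * sqSubPosDiv (a / c) 1 d := by
      rw [← sqSubPosDiv_mul hc.le, mul_div_cancel₀ _ hc.ne', mul_one]
    have hx : 0 ≤ a / c := div_nonneg ha hc.le
    have one : sqSubPosDiv (a / c) 1 1 = a / c * sqSubPosDiv (a / c) 1 (a / c) := by
      rcases hx.eq_or_lt with hx | hx
      · simp [sqSubPosDiv, ← hx]
      · rw [sqSubPosDiv, sqSubPosDiv, abs_of_pos hx, abs_one, div_one, mul_div_cancel₀ _ hx.ne']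
    refine ⟨by simpa [mul_div_cancel₀ _ hc.ne'] using key (a / c), ?_⟩
    have h1 := key 1
    rw [mul_one] at h1
    rw [h1, one, ← mul_assoc, mul_div_cancel₀ _ hc.ne']

/-- Discrete Picone inequality: with `ψ t = (t² - 1)⁺ / t`, the right-hand side equals
`(a d - b c) (ψ (a / c) - ψ (b / d))`, which is nonnegative because `ψ` is monotone. -/
theorem picone_sqSubPosDiv {K a b c d : ℝ} (ha : 0 ≤ a) (hc : 0 ≤ c) (hac : a ≤ K * c)
    (hb : 0 ≤ b) (hd : 0 ≤ d) (hbd : b ≤ K * d) :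
    0 ≤ (a - b) * (sqSubPosDiv a c a - sqSubPosDiv b d b)
      - (c - d) * (sqSubPosDiv a c c - sqSubPosDiv b d d) := by
  obtain ⟨h₁, h₂⟩ := sqSubPosDiv_eq_mul_one ha hc hac
  obtain ⟨h₃, h₄⟩ := sqSubPosDiv_eq_mul_one hb hd hbd
  set ψ : ℝ → ℝ := fun t => sqSubPosDiv t 1 t
  have key : (a - b) * (c * ψ (a / c) - d * ψ (b / d)) - (c - d) * (a * ψ (a / c) - b * ψ (b / d))
      = (a * d - b * c) * (ψ (a / c) - ψ (b / d)) := by ring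
  rw [h₁, h₂, h₃, h₄, key]
  rcases hc.eq_or_lt with rfl | hc
  · obtain rfl : a = 0 := le_antisymm (by simpa using hac) ha
    simp
  rcases hd.eq_or_lt with rfl | hd
  · obtain rfl : b = 0 := le_antisymm (by simpa using hbd) hb
    simp
  have hdet : a * d - b * c = c * d * (a / c - b / d) := by field_simp
  rw [hdet, mul_assoc, mul_comm (a / c - b / d)]
  exact mul_nonneg (by positivity)
    ((monovaryOn_id_iff.2 monotoneOn_sqSubPosDiv_one).sub_mul_sub_nonneg
      (mem_Ici.2 (div_nonneg hb hd.le)) (mem_Ici.2 (div_nonneg ha hc.le)))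

theorem sqSubPosDiv_self_sub_le_left {a b : ℝ} (ha : 0 ≤ a) (hb : 0 ≤ b) (c : ℝ) :
    sqSubPosDiv a c a - sqSubPosDiv b c b ≤ 2 * |a - b| := by
  rcases le_or_gt (a ^ 2) (c ^ 2) with hac | hac
  · rw [sqSubPosDiv_of_sq_le hac]
    linarith [sqSubPosDiv_nonneg b c b, abs_nonneg (a - b)]
  have hca : |c| < a := by nlinarith [sq_abs c, abs_nonneg c]
  have ha' : 0 < a := (abs_nonneg c).trans_lt hca
  rw [sqSubPosDiv_of_sq_lt hac, abs_of_pos ha']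
  rcases le_or_gt (b ^ 2) (c ^ 2) with hbc | hbc
  · have hbc' : b ≤ |c| := by nlinarith [sq_abs c, abs_nonneg c]
    rw [sqSubPosDiv_of_sq_le hbc, sub_zero, div_le_iff₀ ha']
    nlinarith [sq_abs c, le_abs_self (a - b)]
  · have hb' : 0 < b := by nlinarith [sq_abs c, abs_nonneg c]
    rw [sqSubPosDiv_of_sq_lt hbc, abs_of_pos hb', div_sub_div _ _ ha'.ne' hb'.ne',
      div_le_iff₀ (by positivity)]
    have hc2 : c ^ 2 ≤ a * b := by nlinarith [sq_abs c, abs_nonneg c]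
    have : (a ^ 2 - c ^ 2) * b - a * (b ^ 2 - c ^ 2) = (a - b) * (a * b + c ^ 2) := by ring
    rw [this]
    nlinarith [mul_le_mul_of_nonneg_right (le_abs_self (a - b))
      (by positivity : 0 ≤ a * b + c ^ 2), abs_nonneg (a - b)]

theorem sqSubPosDiv_self_sub_le_right {a : ℝ} (ha : 0 ≤ a) (c d : ℝ) :
    sqSubPosDiv a c a - sqSubPosDiv a d a ≤ 2 * |c - d| := by
  rcases ha.eq_or_lt with rfl | ha
  · simp [sqSubPosDiv_zero_left]
  rw [sqSubPosDiv, sqSubPosDiv, ← sub_div, abs_of_pos ha, div_le_iff₀ ha]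
  have hcd : |d| - |c| ≤ |c - d| := by
    rw [abs_sub_comm]; exact abs_sub_abs_le_abs_sub d c
  rcases le_or_gt (a ^ 2) (c ^ 2) with hac | hac
  · rw [max_eq_right (sub_nonpos.2 hac)]
    nlinarith [le_max_right (a ^ 2 - d ^ 2) 0, abs_nonneg (c - d)]
  have hca : |c| < a := by nlinarith [sq_abs c, abs_nonneg c]
  rw [max_eq_left (sub_nonneg.2 hac.le)]
  rcases le_or_gt (a ^ 2) (d ^ 2) with had | had
  · have had' : a ≤ |d| := by nlinarith [sq_abs d, abs_nonneg d]
    rw [max_eq_right (sub_nonpos.2 had)]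
    nlinarith [sq_abs c, abs_nonneg c]
  · have hda : |d| < a := by nlinarith [sq_abs d, abs_nonneg d]
    rw [max_eq_left (sub_nonneg.2 had.le)]
    nlinarith [sq_abs c, sq_abs d, abs_nonneg c, abs_nonneg d, abs_nonneg (c - d)]

theorem sqSubPosDiv_self_sub_le {a b : ℝ} (ha : 0 ≤ a) (hb : 0 ≤ b) (c d : ℝ) :
    sqSubPosDiv a c a - sqSubPosDiv b d b ≤ 2 * (|a - b| + |c - d|) := by
  linarith [sqSubPosDiv_self_sub_le_left ha hb c, sqSubPosDiv_self_sub_le_right hb c d]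

theorem abs_sqSubPosDiv_self_sub_le {a b : ℝ} (ha : 0 ≤ a) (hb : 0 ≤ b) (c d : ℝ) :
    |sqSubPosDiv a c a - sqSubPosDiv b d b| ≤ 2 * (|a - b| + |c - d|) := by
  refine abs_sub_le_iff.2 ⟨sqSubPosDiv_self_sub_le ha hb c d, ?_⟩
  rw [abs_sub_comm a, abs_sub_comm c]
  exact sqSubPosDiv_self_sub_le hb ha d c

theorem sqSubPosDiv_snd_sub_le_left {K a b c : ℝ} (hK : 0 ≤ K) (ha : 0 ≤ a)
    (hb : 0 ≤ b) (hc : 0 ≤ c) (hac : a ≤ K * c) (hbc : b ≤ K * c) :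
    sqSubPosDiv a c c - sqSubPosDiv b c c ≤ 2 * K * |a - b| := by
  rcases hc.eq_or_lt with rfl | hc
  · simp only [sqSubPosDiv, abs_zero, div_zero, sub_self]
    positivity
  rw [sqSubPosDiv, sqSubPosDiv, ← sub_div, abs_of_pos hc, div_le_iff₀ hc]
  calc max (a ^ 2 - c ^ 2) 0 - max (b ^ 2 - c ^ 2) 0 ≤ |a ^ 2 - c ^ 2 - (b ^ 2 - c ^ 2)| :=
        (le_abs_self _).trans (abs_max_sub_max_le_abs _ _ _)
    _ = |a - b| * (a + b) := by
        rw [show a ^ 2 - c ^ 2 - (b ^ 2 - c ^ 2) = (a - b) * (a + b) by ring, abs_mul,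
          abs_of_nonneg (by positivity : 0 ≤ a + b)]
    _ ≤ |a - b| * (2 * K * c) := by gcongr; linarith
    _ = 2 * K * |a - b| * c := by ring

theorem sqSubPosDiv_snd_sub_le_right {K a c d : ℝ} (ha : 0 ≤ a) (hc : 0 ≤ c)
    (hd : 0 ≤ d) (hac : a ≤ K * c) (had : a ≤ K * d) :
    sqSubPosDiv a c c - sqSubPosDiv a d d ≤ (K ^ 2 + 1) * |c - d| := by
  rcases le_or_gt (a ^ 2) (c ^ 2) with hac' | hac'
  · rw [sqSubPosDiv_of_sq_le hac']
    nlinarith [sqSubPosDiv_nonneg a d d, abs_nonneg (c - d), sq_nonneg K]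
  have hca : c < a := by nlinarith
  have hc' : 0 < c := hc.lt_of_ne (by rintro rfl; linarith)
  have hK : 1 ≤ K := by
    by_contra! hK
    nlinarith
  rw [sqSubPosDiv_of_sq_lt hac', abs_of_pos hc']
  rcases le_or_gt (a ^ 2) (d ^ 2) with had' | had'
  · have hda : a ≤ d := by nlinarith
    rw [sqSubPosDiv_of_sq_le had', sub_zero, div_le_iff₀ hc', abs_of_nonpos (by linarith)]
    nlinarith [mul_le_mul_of_nonneg_left hac (by linarith : 0 ≤ K)]
  · have hd' : 0 < d := hd.lt_of_ne (by rintro rfl; linarith)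
    rw [sqSubPosDiv_of_sq_lt had', abs_of_pos hd', div_sub_div _ _ hc'.ne' hd'.ne',
      div_le_iff₀ (by positivity)]
    have hK2 : a ^ 2 ≤ K ^ 2 * (c * d) := by nlinarith [mul_le_mul hac had ha (by positivity)]
    have : (a ^ 2 - c ^ 2) * d - c * (a ^ 2 - d ^ 2) = (d - c) * (a ^ 2 + c * d) := by ring
    rw [this, abs_sub_comm]
    calc (d - c) * (a ^ 2 + c * d) ≤ |d - c| * (a ^ 2 + c * d) := by
          gcongr; exact le_abs_self _
      _ ≤ |d - c| * (K ^ 2 * (c * d) + c * d) := by gcongr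
      _ = (K ^ 2 + 1) * |d - c| * (c * d) := by ring

theorem sqSubPosDiv_snd_sub_le {K a b c d : ℝ} (hK : 0 ≤ K) (ha : 0 ≤ a) (hb : 0 ≤ b)
    (hc : 0 ≤ c) (hd : 0 ≤ d) (hac : a ≤ K * c) (hbd : b ≤ K * d) :
    sqSubPosDiv a c c - sqSubPosDiv b d d ≤ (K + 1) ^ 2 * (|a - b| + |c - d|) := by
  have hbound : (K ^ 2 + 1) * |c - d| + 2 * K * |a - b| ≤ (K + 1) ^ 2 * (|a - b| + |c - d|) := by
    nlinarith [abs_nonneg (a - b), abs_nonneg (c - d)]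
  rcases le_total c d with hcd | hdc
  · have hadK : a ≤ K * d := hac.trans (by gcongr)
    linarith [sqSubPosDiv_snd_sub_le_right ha hc hd hac hadK,
      sqSubPosDiv_snd_sub_le_left hK ha hb hd hadK hbd]
  · have hbcK : b ≤ K * c := hbd.trans (by gcongr)
    linarith [sqSubPosDiv_snd_sub_le_left hK ha hb hc hac hbcK,
      sqSubPosDiv_snd_sub_le_right hb hc hd hbcK hbd]

theorem abs_sqSubPosDiv_snd_sub_le {K a b c d : ℝ} (hK : 0 ≤ K) (ha : 0 ≤ a)
    (hb : 0 ≤ b) (hc : 0 ≤ c) (hd : 0 ≤ d) (hac : a ≤ K * c) (hbd : b ≤ K * d) :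
    |sqSubPosDiv a c c - sqSubPosDiv b d d| ≤ (K + 1) ^ 2 * (|a - b| + |c - d|) := by
  refine abs_sub_le_iff.2 ⟨sqSubPosDiv_snd_sub_le hK ha hb hc hd hac hbd, ?_⟩
  rw [abs_sub_comm a, abs_sub_comm c]
  exact sqSubPosDiv_snd_sub_le hK hb ha hd hc hbd hac

theorem rpow_neg_add_div_lt {q a b : ℝ} {f : ℝ → ℝ} (hq : 0 ≤ q) (hb : 0 < b) (hba : b < a)
    (hf : f a / a < f b / b) : (a ^ (-q) + f a) / a < (b ^ (-q) + f b) / b := by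
  have ha : 0 < a := hb.trans hba
  have hpow : a ^ (-q) / a < b ^ (-q) / b :=
    calc a ^ (-q) / a ≤ b ^ (-q) / a :=
          div_le_div_of_nonneg_right (Real.rpow_le_rpow_of_nonpos hb hba.le (neg_nonpos.2 hq)) ha.le
      _ < b ^ (-q) / b := div_lt_div_of_pos_left (by positivity) hb hba
  rw [add_div, add_div]
  linarith

theorem mul_sqSubPosDiv_sub_nonneg {G : ℝ → ℝ} {a b : ℝ} (ha : 0 < a) (hb : 0 < b)
    (hG : b < a → G a / a < G b / b) :
    0 ≤ G b * sqSubPosDiv a b b - G a * sqSubPosDiv a b a ∧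
      (b < a → 0 < G b * sqSubPosDiv a b b - G a * sqSubPosDiv a b a) := by
  rcases le_or_gt a b with hab | hba
  · simp [sqSubPosDiv_of_sq_le (pow_le_pow_left₀ ha.le hab 2), hab.not_gt]
  have hsq : b ^ 2 < a ^ 2 := pow_lt_pow_left₀ hba hb.le two_ne_zero
  have hpos : 0 < G b * sqSubPosDiv a b b - G a * sqSubPosDiv a b a := by
    rw [sqSubPosDiv_of_sq_lt hsq, sqSubPosDiv_of_sq_lt hsq, abs_of_pos ha, abs_of_pos hb]
    have : G b * ((a ^ 2 - b ^ 2) / b) - G a * ((a ^ 2 - b ^ 2) / a)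
        = (a ^ 2 - b ^ 2) * (G b / b - G a / a) := by ring
    rw [this]
    exact mul_pos (sub_pos.2 hsq) (sub_pos.2 (hG hba))
  exact ⟨hpos.le, fun _ => hpos⟩

theorem Cns_nonneg {n : ℕ} {s : ℝ} (hs0 : 0 ≤ s) (hs1 : s ≤ 1) : 0 ≤ Cns n s := by
  unfold Cns
  have := Real.Gamma_nonneg_of_nonneg (s := ((n : ℝ) + 2 * s) / 2) (by positivity)
  have := Real.Gamma_nonneg_of_nonneg (s := 1 - s) (by linarith)
  positivity

theorem ae_prod_fst_snd {α : Type*} [MeasurableSpace α] {μ : Measure α} [SFinite μ]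
    {P : α → Prop} (h : ∀ᵐ x ∂μ, P x) : ∀ᵐ p ∂μ.prod μ, P p.1 ∧ P p.2 :=
  (Measure.quasiMeasurePreserving_fst.ae h).and (Measure.quasiMeasurePreserving_snd.ae h)

theorem ae_le_of_integral_nonpos {α : Type*} [MeasurableSpace α] {μ : Measure α}
    {F u v : α → ℝ} (hFi : Integrable F μ)
    (hF : ∀ᵐ x ∂μ, 0 ≤ F x ∧ (v x < u x → 0 < F x)) (hint : ∫ x, F x ∂μ ≤ 0) :
    ∀ᵐ x ∂μ, u x ≤ v x := by
  have hF0 : F =ᵐ[μ] 0 :=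
    (integral_eq_zero_iff_of_nonneg_ae (hF.mono fun _ h => h.1) hFi).1
      (le_antisymm hint (integral_nonneg_of_ae (hF.mono fun _ h => h.1)))
  filter_upwards [hF, hF0] with x hx hx0
  by_contra! hlt
  exact (hx.2 hlt).ne' hx0

theorem ae_le_div_mul_of_le_mul {α : Type*} [MeasurableSpace α] {μ : Measure α}
    {u v w : α → ℝ} {c₁ c₂ : ℝ} (hc₁ : 0 < c₁) (hc₂ : 0 ≤ c₂)
    (hu : ∀ᵐ x ∂μ, u x ≤ c₂ * w x) (hv : ∀ᵐ x ∂μ, c₁ * w x ≤ v x) :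
    ∀ᵐ x ∂μ, u x ≤ c₂ / c₁ * v x := by
  filter_upwards [hu, hv] with x hux hvx
  calc u x ≤ c₂ * w x := hux
    _ = c₂ / c₁ * (c₁ * w x) := by field_simp
    _ ≤ c₂ / c₁ * v x := by gcongr

section Gagliardo

variable {n : ℕ} {s : ℝ} {Ω : Set (Eu n)}

theorem gKer_measurable {u v : Eu n → ℝ} (hu : Measurable u) (hv : Measurable v) :
    Measurable (gKer s u v) :=
  (((hu.comp measurable_fst).sub (hu.comp measurable_snd)).mul
    ((hv.comp measurable_fst).sub (hv.comp measurable_snd))).div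
    (measurable_dist.pow_const _)

theorem abs_gKer_le (u v : Eu n → ℝ) (p : Eu n × Eu n) :
    |gKer s u v p| ≤ gKer s u u p + gKer s v v p := by
  have hk : 0 ≤ dist p.1 p.2 ^ ((n : ℝ) + 2 * s) := by positivity
  rw [gKer, gKer, gKer, ← add_div, abs_div, abs_of_nonneg hk]
  gcongr
  rw [abs_mul]
  nlinarith [sq_nonneg (|u p.1 - u p.2| - |v p.1 - v p.2|), sq_abs (u p.1 - u p.2),
    sq_abs (v p.1 - v p.2)]

theorem gKer_self_le_of_abs_sub_le {φ u v : Eu n → ℝ} {L : ℝ} {p : Eu n × Eu n}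
    (h : |φ p.1 - φ p.2| ≤ L * (|u p.1 - u p.2| + |v p.1 - v p.2|)) :
    gKer s φ φ p ≤ 2 * L ^ 2 * gKer s u u p + 2 * L ^ 2 * gKer s v v p := by
  rw [gKer, gKer, gKer, mul_div_assoc', mul_div_assoc', ← add_div]
  gcongr
  have hsq := mul_self_le_mul_self (abs_nonneg _) h
  rw [abs_mul_abs_self] at hsq
  nlinarith [sq_nonneg (|u p.1 - u p.2| - |v p.1 - v p.2|), abs_mul_abs_self (u p.1 - u p.2),
    abs_mul_abs_self (v p.1 - v p.2), sq_nonneg L]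

theorem MemX0.integrableOn_gKer {u v : Eu n → ℝ} (hu : MemX0 s Ω u) (hv : MemX0 s Ω v) :
    IntegrableOn (gKer s u v) (Qset Ω) :=
  (hu.2.2.2.add hv.2.2.2).mono' (gKer_measurable hu.1 hv.1).aestronglyMeasurable
    (Eventually.of_forall fun p => abs_gKer_le u v p)

theorem memX0_of_abs_sub_le {φ u v : Eu n → ℝ} {C L : ℝ} (hu : MemX0 s Ω u)
    (hv : MemX0 s Ω v) (hφ : Measurable φ) (hφ0 : ∀ᵐ x : Eu n, x ∉ Ω → φ x = 0)
    (hφu : ∀ᵐ x ∂(volume.restrict Ω), |φ x| ≤ C * |u x|)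
    (hφuv : ∀ᵐ p : Eu n × Eu n, |φ p.1 - φ p.2| ≤ L * (|u p.1 - u p.2| + |v p.1 - v p.2|)) :
    MemX0 s Ω φ := by
  refine ⟨hφ, hφ0, hu.2.2.1.of_le_mul hφ.aestronglyMeasurable hφu, ?_⟩
  refine ((hu.2.2.2.const_mul (2 * L ^ 2)).add (hv.2.2.2.const_mul (2 * L ^ 2))).mono'
    (gKer_measurable hφ hφ).aestronglyMeasurable (ae_restrict_of_ae ?_)
  filter_upwards [hφuv] with p hp
  rw [Real.norm_eq_abs, abs_of_nonneg (div_nonneg (mul_self_nonneg _) (by positivity))]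
  exact gKer_self_le_of_abs_sub_le hp

theorem bilinE_le_bilinE {u v φ ψ : Eu n → ℝ} (hs0 : 0 ≤ s) (hs1 : s ≤ 1)
    (huφ : IntegrableOn (gKer s u φ) (Qset Ω)) (hvψ : IntegrableOn (gKer s v ψ) (Qset Ω))
    (h : ∀ᵐ p : Eu n × Eu n,
      (v p.1 - v p.2) * (ψ p.1 - ψ p.2) ≤ (u p.1 - u p.2) * (φ p.1 - φ p.2)) :
    bilinE s Ω v ψ ≤ bilinE s Ω u φ := by
  refine mul_le_mul_of_nonneg_left (setIntegral_mono_ae hvψ huφ ?_) (Cns_nonneg hs0 hs1)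
  filter_upwards [h] with p hp
  exact div_le_div_of_nonneg_right hp (by positivity)

end Gagliardo

section Comparison

variable {n : ℕ} {s : ℝ} {Ω : Set (Eu n)} {u v : Eu n → ℝ}

theorem measurable_sqSubPosDiv {d : Eu n → ℝ} (hu : Measurable u) (hv : Measurable v)
    (hd : Measurable d) : Measurable fun x => sqSubPosDiv (u x) (v x) (d x) :=
  (((hu.pow_const 2).sub (hv.pow_const 2)).max measurable_const).div hd.abs

theorem memX0_sqSubPosDiv_self (hu : MemX0 s Ω u) (hv : MemX0 s Ω v)
    (hu0 : ∀ᵐ x, 0 ≤ u x) : MemX0 s Ω fun x => sqSubPosDiv (u x) (v x) (u x) := by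
  refine memX0_of_abs_sub_le (C := 1) (L := 2) hu hv (measurable_sqSubPosDiv hu.1 hv.1 hu.1)
    ?_ (ae_of_all _ fun x => ?_) ?_
  · filter_upwards [hu.2.1] with x hx hxΩ
    rw [hx hxΩ, sqSubPosDiv_zero_left]
  · rw [one_mul, abs_of_nonneg (sqSubPosDiv_nonneg _ _ _)]
    exact sqSubPosDiv_self_le_abs _ _
  · filter_upwards [ae_prod_fst_snd hu0] with p hp
    exact abs_sqSubPosDiv_self_sub_le hp.1 hp.2 _ _

theorem memX0_sqSubPosDiv_snd {K : ℝ} (hK : 0 ≤ K) (hu : MemX0 s Ω u) (hv : MemX0 s Ω v)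
    (huv : ∀ᵐ x, 0 ≤ u x ∧ 0 ≤ v x ∧ u x ≤ K * v x) :
    MemX0 s Ω fun x => sqSubPosDiv (u x) (v x) (v x) := by
  refine memX0_of_abs_sub_le (C := K) (L := (K + 1) ^ 2) hu hv
    (measurable_sqSubPosDiv hu.1 hv.1 hv.1) ?_ (ae_restrict_of_ae ?_) ?_
  · filter_upwards [hu.2.1] with x hx hxΩ
    rw [hx hxΩ, sqSubPosDiv_zero_left]
  · filter_upwards [huv] with x ⟨hux, hvx, huvx⟩
    rw [abs_of_nonneg (sqSubPosDiv_nonneg _ _ _), abs_of_nonneg hux]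
    exact sqSubPosDiv_snd_le_mul hK hux hvx huvx
  · filter_upwards [ae_prod_fst_snd huv] with p ⟨⟨ha, hc, hac⟩, ⟨hb, hd, hbd⟩⟩
    exact abs_sqSubPosDiv_snd_sub_le hK ha hb hc hd hac hbd

theorem bilinE_sqSubPosDiv_le (hs0 : 0 ≤ s) (hs1 : s ≤ 1) {K : ℝ} (hK : 0 ≤ K)
    (hu : MemX0 s Ω u) (hv : MemX0 s Ω v) (huv : ∀ᵐ x, 0 ≤ u x ∧ 0 ≤ v x ∧ u x ≤ K * v x) :
    bilinE s Ω v (fun x => sqSubPosDiv (u x) (v x) (v x)) ≤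
      bilinE s Ω u (fun x => sqSubPosDiv (u x) (v x) (u x)) := by
  refine bilinE_le_bilinE hs0 hs1
    (hu.integrableOn_gKer (memX0_sqSubPosDiv_self hu hv (huv.mono fun _ h => h.1)))
    (hv.integrableOn_gKer (memX0_sqSubPosDiv_snd hK hu hv huv)) ?_
  filter_upwards [ae_prod_fst_snd huv] with p ⟨⟨ha, hc, hac⟩, ⟨hb, hd, hbd⟩⟩
  linarith [picone_sqSubPosDiv ha hc hac hb hd hbd]

end Comparison

theorem statement_14_general
    {n : ℕ} {s : ℝ} (hs0 : 0 < s) (hs1 : s < 1)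
    {Ω : Set (Eu n)}
    {q : ℝ} (hq : 0 < q)
    {g : Eu n → ℝ → ℝ}
    (hdec : ∀ᵐ x ∂(volume.restrict Ω), ∀ y₁ y₂ : ℝ, 0 < y₁ → y₁ < y₂ →
      g x y₂ / y₂ < g x y₁ / y₁)
    {u v : Eu n → ℝ} (huX : MemX0 s Ω u) (hvX : MemX0 s Ω v)
    (hupos : ∀ᵐ x ∂(volume.restrict Ω), 0 < u x)
    (hvpos : ∀ᵐ x ∂(volume.restrict Ω), 0 < v x)
    (husub : ∀ φ : Eu n → ℝ, MemX0 s Ω φ → (∀ x, 0 ≤ φ x) →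
      IntegrableOn (fun x => (u x ^ (-q) + g x (u x)) * φ x) Ω ∧
      bilinE s Ω u φ ≤ ∫ x in Ω, (u x ^ (-q) + g x (u x)) * φ x)
    (hvsup : ∀ φ : Eu n → ℝ, MemX0 s Ω φ → (∀ x, 0 ≤ φ x) →
      IntegrableOn (fun x => (v x ^ (-q) + g x (v x)) * φ x) Ω ∧
      (∫ x in Ω, (v x ^ (-q) + g x (v x)) * φ x) ≤ bilinE s Ω v φ)
    {w : Eu n → ℝ}
    {c₁ c₂ : ℝ} (hc₁ : 0 < c₁) (hc₂ : 0 < c₂)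
    (huw : ∀ᵐ x ∂(volume.restrict Ω), c₁ * w x ≤ u x ∧ u x ≤ c₂ * w x)
    (hvw : ∀ᵐ x ∂(volume.restrict Ω), c₁ * w x ≤ v x ∧ v x ≤ c₂ * w x) :
    ∀ᵐ x ∂(volume.restrict Ω), u x ≤ v x := by
  have hK : 0 ≤ c₂ / c₁ := by positivity
  have huv : ∀ᵐ x ∂(volume.restrict Ω), u x ≤ c₂ / c₁ * v x :=
    ae_le_div_mul_of_le_mul hc₁ hc₂.le (huw.mono fun _ h => h.2) (hvw.mono fun _ h => h.1)
  have hgood : ∀ᵐ x, 0 ≤ u x ∧ 0 ≤ v x ∧ u x ≤ c₂ / c₁ * v x := by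
    filter_upwards [ae_imp_of_ae_restrict (hupos.and (hvpos.and huv)), huX.2.1, hvX.2.1]
      with x hxΩ hu0 hv0
    by_cases hx : x ∈ Ω
    · obtain ⟨hux, hvx, huvx⟩ := hxΩ hx
      exact ⟨hux.le, hvx.le, huvx⟩
    · simp [hu0 hx, hv0 hx]
  obtain ⟨hI₁, hE₁⟩ := husub _ (memX0_sqSubPosDiv_self huX hvX (hgood.mono fun _ h => h.1))
    fun _ => sqSubPosDiv_nonneg _ _ _
  obtain ⟨hI₂, hE₂⟩ := hvsup _ (memX0_sqSubPosDiv_snd hK huX hvX hgood)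
    fun _ => sqSubPosDiv_nonneg _ _ _
  have hE := bilinE_sqSubPosDiv_le hs0.le hs1.le hK huX hvX hgood
  refine ae_le_of_integral_nonpos (hI₂.sub hI₁) ?_ ?_
  · filter_upwards [hupos, hvpos, hdec] with x hux hvx hdx
    exact mul_sqSubPosDiv_sub_nonneg (G := fun y => y ^ (-q) + g x y) hux hvx
      fun hvu => rpow_neg_add_div_lt hq.le hvx hvu (hdx _ _ hvx hvu)
  · exact (integral_sub hI₂ hI₁).trans_le (by linarith)

/-- Weak comparison principle between sub- and supersolutions of
`(−Δ)^s w = w^{-q} + g(x,w)`. -/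
theorem statement_14
    {n : ℕ} {s : ℝ} (hs0 : 0 < s) (hs1 : s < 1) (hns : 2 * s < (n : ℝ))
    {Ω : Set (Eu n)} (hΩ : GoodDomain Ω)
    {q : ℝ} (hq : 0 < q)
    {g : Eu n → ℝ → ℝ} (hcar : Caratheodory Ω g) (hbdd : BddBelowF Ω g)
    (hdec : ∀ᵐ x ∂(volume.restrict Ω), ∀ y₁ y₂ : ℝ, 0 < y₁ → y₁ < y₂ →
      g x y₂ / y₂ < g x y₁ / y₁)
    {u v : Eu n → ℝ} (huX : MemX0 s Ω u) (hvX : MemX0 s Ω v)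
    (huB : MemLinfty Ω u) (hvB : MemLinfty Ω v)
    (hupos : ∀ᵐ x ∂(volume.restrict Ω), 0 < u x)
    (hvpos : ∀ᵐ x ∂(volume.restrict Ω), 0 < v x)
    (huint : IntegrableOn (fun x => u x ^ (1 - q)) Ω)
    (hvint : IntegrableOn (fun x => v x ^ (1 - q)) Ω)
    (husub : ∀ φ : Eu n → ℝ, MemX0 s Ω φ → (∀ x, 0 ≤ φ x) →
      IntegrableOn (fun x => (u x ^ (-q) + g x (u x)) * φ x) Ω ∧
      bilinE s Ω u φ ≤ ∫ x in Ω, (u x ^ (-q) + g x (u x)) * φ x)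
    (hvsup : ∀ φ : Eu n → ℝ, MemX0 s Ω φ → (∀ x, 0 ≤ φ x) →
      IntegrableOn (fun x => (v x ^ (-q) + g x (v x)) * φ x) Ω ∧
      (∫ x in Ω, (v x ^ (-q) + g x (v x)) * φ x) ≤ bilinE s Ω v φ)
    {w : Eu n → ℝ} (hwmeas : Measurable w) (hwB : MemLinfty Ω w)
    (hwpos : ∀ᵐ x ∂(volume.restrict Ω), 0 < w x)
    {c₁ c₂ : ℝ} (hc₁ : 0 < c₁) (hc₂ : 0 < c₂)
    (huw : ∀ᵐ x ∂(volume.restrict Ω), c₁ * w x ≤ u x ∧ u x ≤ c₂ * w x)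
    (hvw : ∀ᵐ x ∂(volume.restrict Ω), c₁ * w x ≤ v x ∧ v x ≤ c₂ * w x)
    (hg₁ : IntegrableOn (fun x => |g x (c₁ * w x)| * w x) Ω)
    (hg₂ : IntegrableOn (fun x => |g x (c₂ * w x)| * w x) Ω) :
    ∀ᵐ x ∂(volume.restrict Ω), u x ≤ v x :=
  statement_14_general hs0 hs1 hq hdec huX hvX hupos hvpos husub hvsup hc₁ hc₂ huw hvw
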